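/- Suppose X = [[x₁,x₂],[x₃,x₄]] and Y ∈ SL(2,ℝ), with X = diag(λ,1/λ) hyperbolic (λ real, 0<|λ|<1) and Y = [[a,b],[c,d]], and suppose the commutator [X,Y] is conjugate to -[[1,1],[0,1]] (i.e. [X,Y] has trace -2 and its conjugacy data gives σ = i). Then bc = 4/(λ - λ⁻¹)² > 0, a ≠ 0, ad = bc + 1 > 0, and (λ²-1)·a·b > 0 forces ac < 0. -/

import Mathlib

/-!
The commutator of `diag(l, l⁻¹)` with `Y = !![a, b; c, d]` has trace `2 - bc (l - l⁻¹)²`, so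
trace `-2` pins `bc = 4 / (l - l⁻¹)²`, which is positive because `|l| ≠ 1`; then
`ad = 1 + bc > 0`. Since `l² < 1`, positivity of `(l² - 1) ab` gives `ab < 0`, and `ac` has the
sign of `(ab)(bc) < 0`.
-/

open Matrix

section CommRing

variable {R : Type*} [CommRing R]

theorem inv_fin_two_of_det_eq_one {a b c d : R} (h : a * d - b * c = 1) :
    (!![a, b; c, d])⁻¹ = !![d, -b; -c, a] := by
  rw [inv_def, det_fin_two_of, h, Ring.inverse_one, one_smul, adjugate_fin_two_of]

end CommRing

section Field

variable {K : Type*} [Field K] {l a b c d : K}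

theorem diag_inv_fin_two (hl : l ≠ 0) : (!![l, 0; 0, l⁻¹])⁻¹ = !![l⁻¹, 0; 0, l] := by
  have hdet : l * l⁻¹ - 0 * 0 = 1 := by rw [mul_inv_cancel₀ hl, mul_zero, sub_zero]
  rw [inv_fin_two_of_det_eq_one hdet, neg_zero]

theorem diag_commutator_fin_two (hl : l ≠ 0) (h : a * d - b * c = 1) :
    !![l, 0; 0, l⁻¹] * !![a, b; c, d] * (!![l, 0; 0, l⁻¹])⁻¹ * (!![a, b; c, d])⁻¹ =
      !![a * d - l ^ 2 * b * c, (l ^ 2 - 1) * a * b;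
        (l⁻¹ ^ 2 - 1) * c * d, a * d - l⁻¹ ^ 2 * b * c] := by
  rw [diag_inv_fin_two hl, inv_fin_two_of_det_eq_one h]
  have hl' := mul_inv_cancel₀ hl
  ext i j
  fin_cases i <;> fin_cases j <;>
    simp only [mul_fin_two, of_apply, cons_val', cons_val_zero, cons_val_one, cons_val_fin_one,
      Fin.zero_eta, Fin.mk_one, Fin.isValue]
  · linear_combination a * d * hl'
  · linear_combination -a * b * hl'
  · linear_combination -c * d * hl'
  · linear_combination a * d * hl'

theorem trace_diag_commutator_fin_two (hl : l ≠ 0) (h : a * d - b * c = 1) :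
    trace (!![l, 0; 0, l⁻¹] * !![a, b; c, d] * (!![l, 0; 0, l⁻¹])⁻¹ * (!![a, b; c, d])⁻¹) =
      2 - b * c * (l - l⁻¹) ^ 2 := by
  rw [diag_commutator_fin_two hl h, trace_fin_two_of]
  linear_combination 2 * h - 2 * b * c * mul_inv_cancel₀ hl

end Field

section LinearOrderedField

variable {K : Type*} [Field K] [LinearOrder K] [IsStrictOrderedRing K]

theorem sub_inv_ne_zero_of_abs_lt_one {l : K} (hl : l ≠ 0) (hl1 : |l| < 1) : l - l⁻¹ ≠ 0 := by
  intro h0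
  have hsq : l ^ 2 = 1 :=
    calc l ^ 2 = l * l := sq l
      _ = l * l⁻¹ := by rw [← sub_eq_zero.mp h0]
      _ = 1 := mul_inv_cancel₀ hl
  exact ((sq_lt_one_iff_abs_lt_one l).mpr hl1).ne hsq

theorem mul_neg_of_mul_neg_of_mul_pos {a b c : K} (hab : a * b < 0) (hbc : 0 < b * c) :
    a * c < 0 := by
  have hacb : a * c * b ^ 2 < 0 :=
    calc a * c * b ^ 2 = a * b * (b * c) := by ring
      _ < 0 := mul_neg_of_neg_of_pos hab hbc
  exact neg_of_mul_neg_left hacb (sq_nonneg b)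

end LinearOrderedField

/-- Let `X = diag(l, 1/l)` with `0 < |l| < 1` and `Y = !![a,b;c,d] ∈ SL(2,ℝ)`. If the
commutator `[X,Y]` has trace `-2` and its `(1,2)`-entry `(l²-1)ab` is positive, then
`bc = 4/(l-l⁻¹)² > 0`, `a ≠ 0`, `ad = bc + 1 > 0`, and `ac < 0`. -/
theorem comm_neg_parabolic_entries (l a b c d : ℝ)
    (hl0 : 0 < |l|) (hl1 : |l| < 1) (h : a * d - b * c = 1)
    (htr : Matrix.trace
        (!![l, 0; 0, l⁻¹] * !![a, b; c, d] * (!![l, 0; 0, l⁻¹])⁻¹ * (!![a, b; c, d])⁻¹)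
      = -2)
    (hab : 0 < (l ^ 2 - 1) * a * b) :
    b * c = 4 / (l - l⁻¹) ^ 2 ∧ 0 < b * c ∧ a ≠ 0 ∧
    a * d = b * c + 1 ∧ 0 < a * d ∧ a * c < 0 := by
  have hl : l ≠ 0 := abs_pos.mp hl0
  have hsq : (l - l⁻¹) ^ 2 ≠ 0 := pow_ne_zero 2 (sub_inv_ne_zero_of_abs_lt_one hl hl1)
  have hbc : b * c = 4 / (l - l⁻¹) ^ 2 := by
    refine eq_div_of_mul_eq hsq ?_
    linarith [trace_diag_commutator_fin_two hl h]
  have hbc0 : 0 < b * c := by rw [hbc]; positivity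
  have had : a * d = b * c + 1 := by linarith
  have had0 : 0 < a * d := by linarith
  have hab' : a * b < 0 := by
    have hl2 : l ^ 2 - 1 ≤ 0 := by linarith [(sq_lt_one_iff_abs_lt_one l).mpr hl1]
    exact neg_of_mul_pos_right (by rwa [mul_assoc] at hab) hl2
  exact ⟨hbc, hbc0, left_ne_zero_of_mul had0.ne', had, had0,
    mul_neg_of_mul_neg_of_mul_pos hab' hbc0⟩
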